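/- For all k ≥ 0, F_{2k+2} - k - 1 = Σ_{i=0}^{k-1} C(k+1-i, 2) F_{2i+1}. -/

import Mathlib

/-!
Raising `k` by one raises the weight `C(k+1-i, 2)` by `k+1-i` (Pascal's rule), and raising `n`
by one raises the weight `n-i` by `1`. So the weighted sum is a third iterated partial sum of the
odd-indexed Fibonacci numbers, and the three closed forms `F_{2n}`, `F_{2n+1} - 1` and
`F_{2k+2} - k - 1` follow one from the other by `F_{m+2} = F_m + F_{m+1}`.
-/

open Finset

theorem sum_range_smul_of_weight_succ {M : Type*} [AddCommMonoid M] (w d : ℕ → ℕ)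
    (hw : ∀ m, w (m + 1) = w m + d m) (f : ℕ → M) (n : ℕ) :
    ∑ i ∈ range n, w (n + 1 - i) • f i =
      ∑ i ∈ range n, w (n - i) • f i + ∑ i ∈ range n, d (n - i) • f i := by
  rw [← sum_add_distrib]
  refine sum_congr rfl fun i hi => ?_
  rw [Nat.succ_sub (mem_range.mp hi).le, hw, add_smul]

theorem sum_range_fib_two_mul_add_one (n : ℕ) :
    ∑ i ∈ range n, Nat.fib (2 * i + 1) = Nat.fib (2 * n) := by
  induction n with
  | zero => simp
  | succ n ih =>
    rw [sum_range_succ, ih, Nat.mul_succ, Nat.fib_add_two]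

theorem sum_range_sub_mul_fib_two_mul_add_one (n : ℕ) :
    ∑ i ∈ range n, (n - i) * Nat.fib (2 * i + 1) + 1 = Nat.fib (2 * n + 1) := by
  induction n with
  | zero => simp
  | succ n ih =>
    have step := sum_range_smul_of_weight_succ id (fun _ => 1) (fun _ => rfl)
      (fun i => Nat.fib (2 * i + 1)) n
    simp only [id, smul_eq_mul, one_mul] at step
    have hF : Nat.fib (2 * (n + 1) + 1) = Nat.fib (2 * n) + 2 * Nat.fib (2 * n + 1) := by
      rw [Nat.mul_succ, Nat.fib_add_two, Nat.fib_add_two]; ring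
    rw [sum_range_succ, step, sum_range_fib_two_mul_add_one, Nat.add_sub_cancel_left, hF]
    omega

theorem sum_range_choose_mul_fib_two_mul_add_one (k : ℕ) :
    ∑ i ∈ range k, (k + 1 - i).choose 2 * Nat.fib (2 * i + 1) + k + 1 = Nat.fib (2 * k + 2) := by
  induction k with
  | zero => simp
  | succ k ih =>
    have step := sum_range_smul_of_weight_succ (fun m => m.choose 2) id
      (fun m => by rw [Nat.choose_succ_succ', Nat.choose_one_right, add_comm]; rfl)
      (fun i => Nat.fib (2 * i + 1)) (k + 1)
    simp only [id, smul_eq_mul] at step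
    have hT := sum_range_sub_mul_fib_two_mul_add_one (k + 1)
    have hF : Nat.fib (2 * (k + 1) + 2) = Nat.fib (2 * k + 2) + Nat.fib (2 * (k + 1) + 1) := by
      rw [Nat.mul_succ, Nat.fib_add_two]
    rw [step, sum_range_succ _ k, Nat.add_sub_cancel_left, Nat.choose_succ_self, zero_mul, add_zero]
    omega

theorem fib_even_weighted_sum (k : ℕ) :
    (Nat.fib (2 * k + 2) : ℤ) - k - 1 =
      ∑ i ∈ Finset.range k, (Nat.choose (k + 1 - i) 2 : ℤ) * Nat.fib (2 * i + 1) := by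
  rw [← sum_range_choose_mul_fib_two_mul_add_one k]
  push_cast
  ring
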